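/- Let f : ℝ → ℂ be smooth, α ∈ ℕ, ã ∈ ℤ. Then for all n ∈ ℤ, |τ^ã δ^α f(n)|² ≤ 2^{2α} ∫_{[0,1]^α} |f^{(α)}(n + 2ã - 2(s_1+⋯+s_α))|² ds. -/

import Mathlib

open MeasureTheory Set
open scoped ContDiff

noncomputable abbrev nuI : Measure ℝ := (volume : Measure ℝ).restrict (Set.Icc (0:ℝ) 1)

instance : IsProbabilityMeasure nuI := ⟨by simp [Real.volume_Icc]⟩

lemma pi_restrict_Icc (k : ℕ) :
    (volume : Measure (Fin k → ℝ)).restrict (Set.Icc 0 1)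
      = Measure.pi (fun _ : Fin k => nuI) := by
  refine (Measure.pi_eq fun s hs => ?_).symm
  rw [← Set.pi_univ_Icc, Measure.restrict_apply (MeasurableSet.univ_pi hs),
    ← Set.pi_inter_distrib]
  rw [volume_pi_pi]
  exact Finset.prod_congr rfl fun i _ => by
    rw [Measure.restrict_apply (hs i)]; simp

lemma integrable_pi_restrict {E : Type*} [NormedAddCommGroup E] {k : ℕ}
    {F : (Fin k → ℝ) → E} (hF : Continuous F) :
    Integrable F (Measure.pi fun _ : Fin k => nuI) := by
  rw [← pi_restrict_Icc]
  exact hF.integrableOn_Icc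

lemma step_sub (g : ℝ → ℂ) (hg : ContDiff ℝ ∞ g) (y : ℝ) :
    g y - g (y - 2) = 2 * ∫ t, deriv g (y - 2 * t) ∂nuI := by
  have hg' : Continuous (deriv g) := hg.continuous_deriv (by exact_mod_cast le_top)
  have hd : ∀ t ∈ Set.uIcc (0:ℝ) 1,
      HasDerivAt (fun t : ℝ => g (y - 2 * t)) ((-2 : ℝ) • deriv g (y - 2 * t)) t := by
    intro t _
    have h1 : HasDerivAt g (deriv g (y - 2 * t)) (y - 2 * t) :=
      (hg.differentiable (by simp) (y - 2 * t)).hasDerivAt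
    have h2 : HasDerivAt (fun t : ℝ => y - 2 * t) (-2) t := by
      simpa using ((hasDerivAt_id t).const_mul (2:ℝ)).const_sub y
    exact h1.scomp t h2
  have hInt : IntervalIntegrable (fun t : ℝ => (-2 : ℝ) • deriv g (y - 2 * t)) volume 0 1 :=
    ((by fun_prop :
        Continuous fun t : ℝ => (-2 : ℝ) • deriv g (y - 2 * t))).intervalIntegrable 0 1
  have hftc := intervalIntegral.integral_eq_sub_of_hasDerivAt hd hInt
  have hI : ∫ t, deriv g (y - 2 * t) ∂nuI = ∫ t in (0:ℝ)..1, deriv g (y - 2 * t) := by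
    rw [intervalIntegral.integral_of_le zero_le_one, ← integral_Icc_eq_integral_Ioc]
  rw [intervalIntegral.integral_smul] at hftc
  rw [hI]
  have h10 : y - 2 * (1:ℝ) = y - 2 := by ring
  have h00 : y - 2 * (0:ℝ) = y := by ring
  rw [h10, h00] at hftc
  simp only [neg_smul, Complex.real_smul, Complex.ofReal_ofNat] at hftc
  linear_combination hftc

lemma rep (f : ℝ → ℂ) (hf : ContDiff ℝ ∞ f) (k : ℕ) :
    ∀ x : ℝ, (fun g : ℝ → ℂ => fun y => g y - g (y - 2))^[k] f x
      = (2:ℂ) ^ k * ∫ s, iteratedDeriv k f (x - 2 * ∑ i, s i)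
          ∂(Measure.pi fun _ : Fin k => nuI) := by
  induction k with
  | zero =>
      intro x
      rw [Function.iterate_zero_apply, pow_zero, one_mul]
      have h0 : ∀ s : Fin 0 → ℝ, iteratedDeriv 0 f (x - 2 * ∑ i, s i) = f x := by
        intro s; simp
      simp_rw [h0]
      rw [integral_const]
      simp
  | succ k ih =>
      intro x
      have hg : ContDiff ℝ ∞ (iteratedDeriv k f) := by
        rw [iteratedDeriv_eq_iterate]; exact ContDiff.iterate_deriv k hf
      have hsum : Continuous fun s : Fin k → ℝ => ∑ i, s i :=
        continuous_finset_sum _ fun i _ => continuous_apply i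
      have hc1 : Continuous fun s : Fin k → ℝ => iteratedDeriv k f (x - 2 * ∑ i, s i) :=
        hg.continuous.comp (by fun_prop)
      have hc2 : Continuous fun s : Fin k → ℝ =>
          iteratedDeriv k f (x - 2 - 2 * ∑ i, s i) :=
        hg.continuous.comp (by fun_prop)
      rw [Function.iterate_succ_apply']
      show (fun g : ℝ → ℂ => fun y => g y - g (y - 2))^[k] f x
          - (fun g : ℝ → ℂ => fun y => g y - g (y - 2))^[k] f (x - 2) = _
      rw [ih x, ih (x - 2)]
      rw [← mul_sub, ← integral_sub (integrable_pi_restrict hc1) (integrable_pi_restrict hc2)]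
      have hptwise : ∀ s : Fin k → ℝ,
          iteratedDeriv k f (x - 2 * ∑ i, s i) - iteratedDeriv k f (x - 2 - 2 * ∑ i, s i)
            = 2 * ∫ t, iteratedDeriv (k+1) f (x - 2 * ∑ i, s i - 2 * t) ∂nuI := by
        intro s
        have := step_sub (iteratedDeriv k f) hg (x - 2 * ∑ i, s i)
        rw [show x - 2 * ∑ i, s i - 2 = x - 2 - 2 * ∑ i, s i by ring] at this
        rw [this, iteratedDeriv_succ]
      simp_rw [hptwise]
      rw [integral_const_mul]
      have hg'c : Continuous (iteratedDeriv (k+1) f) := by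
        rw [iteratedDeriv_eq_iterate]
        exact (ContDiff.iterate_deriv (k+1) hf).continuous
      have hIntz : Integrable
          (fun z : ℝ × (Fin k → ℝ) => iteratedDeriv (k+1) f (x - 2 * ∑ i, z.2 i - 2 * z.1))
          (nuI.prod (Measure.pi fun _ : Fin k => nuI)) := by
        rw [← pi_restrict_Icc, Measure.prod_restrict, Set.Icc_prod_Icc]
        have : Continuous
            (fun z : ℝ × (Fin k → ℝ) => iteratedDeriv (k+1) f (x - 2 * ∑ i, z.2 i - 2 * z.1)) := by
          apply hg'c.comp
          have : Continuous fun z : ℝ × (Fin k → ℝ) => ∑ i, z.2 i :=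
            (continuous_finset_sum _ fun i _ => continuous_apply i).comp continuous_snd
          fun_prop
        exact this.integrableOn_Icc
      have hfub : (∫ s, (∫ t, iteratedDeriv (k+1) f (x - 2 * ∑ i, s i - 2 * t) ∂nuI)
            ∂(Measure.pi fun _ : Fin k => nuI))
          = ∫ u, iteratedDeriv (k+1) f (x - 2 * ∑ i, u i)
              ∂(Measure.pi fun _ : Fin (k+1) => nuI) := by
        have mp := (measurePreserving_piFinSuccAbove (fun _ : Fin (k+1) => nuI) 0).symm
        rw [← mp.integral_comp' (fun u => iteratedDeriv (k+1) f (x - 2 * ∑ i, u i))]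
        have hsymm : ∀ z : ℝ × (Fin k → ℝ),
            iteratedDeriv (k+1) f (x - 2 * ∑ i,
                ((MeasurableEquiv.piFinSuccAbove (fun _ : Fin (k+1) => ℝ) 0).symm z) i)
              = iteratedDeriv (k+1) f (x - 2 * ∑ i, z.2 i - 2 * z.1) := by
          intro z
          congr 1
          simp only [MeasurableEquiv.piFinSuccAbove_symm_apply, Fin.insertNthEquiv,
            Equiv.coe_fn_mk, Fin.insertNth_zero, Fin.sum_univ_succ, Fin.cons_zero, Fin.cons_succ,
            Fin.zero_succAbove, cast_eq]
          ring
        simp_rw [hsymm]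
        rw [integral_prod _ hIntz]
        exact (integral_integral_swap hIntz).symm
      rw [hfub]
      ring

lemma transfer (F : ℝ → ℂ) (k : ℕ) :
    ∀ m : ℤ, (fun g : ℤ → ℂ => fun m => g m - g (m - 2))^[k] (fun m => F m) m
      = (fun g : ℝ → ℂ => fun y => g y - g (y - 2))^[k] F m := by
  induction k with
  | zero => intro m; simp
  | succ k ih =>
      intro m
      rw [Function.iterate_succ_apply', Function.iterate_succ_apply']
      show (fun g : ℤ → ℂ => fun m => g m - g (m - 2))^[k] (fun m => F m) m
          - (fun g : ℤ → ℂ => fun m => g m - g (m - 2))^[k] (fun m => F m) (m - 2)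
        = (fun g : ℝ → ℂ => fun y => g y - g (y - 2))^[k] F (m : ℝ)
          - (fun g : ℝ → ℂ => fun y => g y - g (y - 2))^[k] F ((m : ℝ) - 2)
      rw [ih m, ih (m - 2)]
      norm_num

lemma sq_int_le {X : Type*} [MeasurableSpace X] (μ : Measure X) [IsProbabilityMeasure μ]
    (u : X → ℝ) (hu : Integrable u μ) (hu2 : Integrable (fun x => u x ^ 2) μ) :
    (∫ x, u x ∂μ) ^ 2 ≤ ∫ x, u x ^ 2 ∂μ := by
  set c := ∫ x, u x ∂μ with hc
  have h0 : (0:ℝ) ≤ ∫ x, (u x - c) ^ 2 ∂μ := integral_nonneg fun x => sq_nonneg _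
  have hexp : ∫ x, (u x - c) ^ 2 ∂μ = (∫ x, u x ^ 2 ∂μ) - 2 * c * c + c ^ 2 := by
    have h1 : ∀ x, (u x - c) ^ 2 = u x ^ 2 - (2 * c) * u x + c ^ 2 := fun x => by ring
    simp_rw [h1]
    have hA : Integrable (fun x => u x ^ 2 - 2 * c * u x) μ := hu2.sub (hu.const_mul (2 * c))
    have hB : Integrable (fun x => 2 * c * u x) μ := hu.const_mul (2 * c)
    rw [integral_add hA (integrable_const _), integral_sub hu2 hB, integral_const_mul,
      integral_const]
    simp [measure_univ, ← hc]
  nlinarith [h0, hexp]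

theorem shifted_iterated_difference_sq_bound (f : ℝ → ℂ) (hf : ContDiff ℝ (⊤ : ℕ∞) f)
    (α : ℕ) (atil : ℤ) (n : ℤ) :
    ‖(fun g : ℤ → ℂ => fun m => g m - g (m - 2))^[α] (fun m => f m) (n + 2 * atil)‖ ^ 2
      ≤ 2 ^ (2 * α) * ∫ s : Fin α → ℝ in Set.Icc 0 1,
          ‖iteratedDeriv α f ((n : ℝ) + 2 * atil - 2 * ∑ i, s i)‖ ^ 2 := by
  have hf' : ContDiff ℝ ∞ f := hf.of_le (by simp)
  have hcast : (((n + 2 * atil : ℤ) : ℝ)) = (n : ℝ) + 2 * atil := by push_cast; ring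
  have key := rep f hf' α ((n : ℝ) + 2 * atil)
  rw [transfer f α (n + 2 * atil), hcast, key, pi_restrict_Icc α]
  set μk := Measure.pi fun _ : Fin α => nuI with hμk
  set F := fun s : Fin α → ℝ => iteratedDeriv α f ((n : ℝ) + 2 * atil - 2 * ∑ i, s i) with hF
  have hgc : Continuous (iteratedDeriv α f) := by
    rw [iteratedDeriv_eq_iterate]
    exact (ContDiff.iterate_deriv α hf').continuous
  have hFc : Continuous F := by
    apply hgc.comp
    have : Continuous fun s : Fin α → ℝ => ∑ i, s i :=
      continuous_finset_sum _ fun i _ => continuous_apply i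
    fun_prop
  have hb1 : ‖∫ s, F s ∂μk‖ ≤ ∫ s, ‖F s‖ ∂μk := by
    exact norm_integral_le_integral_norm F
  have hb3 : (∫ s, ‖F s‖ ∂μk) ^ 2 ≤ ∫ s, ‖F s‖ ^ 2 ∂μk :=
    sq_int_le μk _ (integrable_pi_restrict hFc.norm)
      (integrable_pi_restrict ((hFc.norm).pow 2))
  have habs : ‖(2:ℂ) ^ α * ∫ s, F s ∂μk‖
      = 2 ^ α * ‖∫ s, F s ∂μk‖ := by
    simp
  rw [habs, mul_pow, show ((2:ℝ) ^ α) ^ 2 = 2 ^ (2 * α) by rw [← pow_mul, mul_comm]]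
  have hb2 : ‖∫ s, F s ∂μk‖ ^ 2 ≤ (∫ s, ‖F s‖ ∂μk) ^ 2 :=
    pow_le_pow_left₀ (norm_nonneg _) hb1 2
  refine mul_le_mul_of_nonneg_left ?_ (by positivity)
  refine (hb2.trans hb3).trans_eq ?_
  rfl
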